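/- arXiv:math/0610498 — 2 statements merged into one kernel-verified Lean document; each statement's English description precedes it below -/
import Mathlib

section
/- Let A ∈ ℂ^{n×n} be Hermitian, let [X, X⊥] ∈ ℂ^{n×n} be unitary with X ∈ ℂ^{n×k}, suppose range(X) is A-invariant, and let Y ∈ ℂ^{n×k} have orthonormal columns. Set C := X^H Y, S := X⊥^H Y, A₁₁ := X^H A X, and A₂₂ := X⊥^H A X⊥. Then λ(X^H A X) − λ(Y^H A Y) ≺ [λ(A₁₁) − λ(C^H A₁₁ C)]^↓ + λ(−S^H A₂₂ S), where ≺ denotes (strong) majorization. -/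
open Matrix Finset

/-- The entries of `x` rearranged in nonincreasing (descending) order. -/
noncomputable def sortDown {k : ℕ} (x : Fin k → ℝ) : Fin k → ℝ :=
  fun i => x (Tuple.sort x i.rev)

/-- The eigenvalues of a Hermitian matrix arranged in nonincreasing order. -/
noncomputable def eigDown {k : ℕ} {M : Matrix (Fin k) (Fin k) ℂ} (hM : M.IsHermitian) :
    Fin k → ℝ :=
  sortDown hM.eigenvalues

/-- The singular values of `B` (square roots of the eigenvalues of `Bᴴ * B`),
arranged in nonincreasing order; there are as many as columns of `B`,
extra ones (beyond `min(#rows, #cols)`) being zero. -/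
noncomputable def singDown {R : Type*} [Fintype R] {k : ℕ} (B : Matrix R (Fin k) ℂ) :
    Fin k → ℝ :=
  sortDown fun i => Real.sqrt ((Matrix.isHermitian_conjTranspose_mul_self B).eigenvalues i)

/-- The spread of the spectrum of a Hermitian matrix: `λ_max - λ_min`. -/
noncomputable def sprA {R : Type*} [Fintype R] [DecidableEq R] {A : Matrix R R ℂ}
    (hA : A.IsHermitian) : ℝ :=
  sSup (Set.range hA.eigenvalues) - sInf (Set.range hA.eigenvalues)

/-- The spectral norm of `B`, i.e. its largest singular value. -/
noncomputable def specNorm {R : Type*} [Fintype R] {k : ℕ} (B : Matrix R (Fin k) ℂ) : ℝ :=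
  sSup (Set.range (singDown B))

/-- The principal angles between the ranges of `X` and `Y` (matrices with `k`
orthonormal columns), arranged in nonincreasing order: their cosines are the
singular values of `Xᴴ * Y` arranged in nondecreasing order. -/
noncomputable def principalAngles {R : Type*} [Fintype R] {k : ℕ}
    (X Y : Matrix R (Fin k) ℂ) : Fin k → ℝ :=
  fun i => Real.arccos (singDown (Xᴴ * Y) i.rev)

/-- The sum of the `j` largest entries of `x`. -/
noncomputable def psum {k : ℕ} (x : Fin k → ℝ) (j : ℕ) : ℝ :=
  ∑ i ∈ Finset.univ.filter fun i : Fin k => (i : ℕ) < j, sortDown x i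

/-- `x` is weakly (sub-)majorized by `y`: every partial sum of the `j` largest
entries of `x` is at most the corresponding partial sum for `y`. -/
def WeakMaj {k : ℕ} (x y : Fin k → ℝ) : Prop :=
  ∀ j : ℕ, psum x j ≤ psum y j

/-- `x` is (strongly) majorized by `y`. -/
def Maj {k : ℕ} (x y : Fin k → ℝ) : Prop :=
  WeakMaj x y ∧ ∑ i, x i = ∑ i, y i

/-- The range (column space) of `X` is an invariant subspace of `A`. -/
def InvariantRange {R : Type*} [Fintype R] {k : ℕ} (A : Matrix R R ℂ)
    (X : Matrix R (Fin k) ℂ) : Prop :=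
  ∀ u : Fin k → ℂ, ∃ w : Fin k → ℂ, A.mulVec (X.mulVec u) = X.mulVec w

/-!
Since `range X` is `A`-invariant, `A` is block diagonal in the basis `[X, X⊥]`,
hence `Yᴴ A Y = Cᴴ A₁₁ C + Sᴴ A₂₂ S`. Split
`λ(A₁₁) - λ(Yᴴ A Y) = d + e` with `d = λ(A₁₁) - λ(Cᴴ A₁₁ C)` and
`e = λ(Yᴴ A Y - Sᴴ A₂₂ S) - λ(Yᴴ A Y)`. By Lidskii's theorem, the sum of `e` over any `j`
indices is at most the sum of the `j` largest eigenvalues of `-Sᴴ A₂₂ S`, with equality of the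
totals (traces). The sum of `d` over the same indices is at most the sum of its `j` largest
entries, so `d + e ≺ d↓ + λ(-Sᴴ A₂₂ S)`.
-/

section Sorting

variable {k : ℕ}

noncomputable def sortPerm (x : Fin k → ℝ) : Equiv.Perm (Fin k) :=
  Fin.revPerm.trans (Tuple.sort x)

lemma sum_sortDown (x : Fin k → ℝ) : ∑ i, sortDown x i = ∑ i, x i :=
  Equiv.sum_comp (sortPerm x) x

lemma sortDown_antitone (x : Fin k → ℝ) : Antitone (sortDown x) :=
  fun _ _ hij => Tuple.monotone_sort x (Fin.rev_le_rev.mpr hij)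

lemma sortDown_eq_self_of_antitone {x : Fin k → ℝ} (hx : Antitone x) : sortDown x = x := by
  have h := (Tuple.comp_sort_eq_comp_iff_monotone (σ := Fin.revPerm)).mpr
    fun a b hab => hx (Fin.rev_le_rev.mpr hab)
  funext i
  simpa [sortDown, Fin.rev_rev] using (congrFun h i.rev).symm

lemma exists_card_eq_forall_sortDown_le (x : Fin k → ℝ) (i : Fin k) :
    ∃ J : Finset (Fin k), #J = i + 1 ∧ ∀ j ∈ J, sortDown x i ≤ x j := by
  refine ⟨(Iic i).map (sortPerm x).toEmbedding, by simp, ?_⟩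
  simp only [forall_mem_map, mem_Iic]
  exact fun l hl => sortDown_antitone x hl

lemma exists_card_eq_forall_le_sortDown (x : Fin k → ℝ) (i : Fin k) :
    ∃ J : Finset (Fin k), #J = k - i ∧ ∀ j ∈ J, x j ≤ sortDown x i := by
  refine ⟨(Ici i).map (sortPerm x).toEmbedding, by simp, ?_⟩
  simp only [forall_mem_map, mem_Ici]
  exact fun l hl => sortDown_antitone x hl

end Sorting

section PartialSums

variable {k : ℕ}

lemma psum_zero (x : Fin k → ℝ) : psum x 0 = 0 := by
  simp [psum]

lemma psum_of_le (x : Fin k → ℝ) {j : ℕ} (h : k ≤ j) : psum x j = ∑ i, x i := by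
  rw [psum, filter_true_of_mem fun i _ => i.2.trans_le h, sum_sortDown]

lemma psum_add_of_antitone {x y : Fin k → ℝ} (hx : Antitone x) (hy : Antitone y) (j : ℕ) :
    psum (x + y) j = psum x j + psum y j := by
  rw [psum, psum, psum, sortDown_eq_self_of_antitone (x := x + y) (hx.add hy),
    sortDown_eq_self_of_antitone hx, sortDown_eq_self_of_antitone hy, ← sum_add_distrib]
  rfl

lemma sum_posPart_sub_sortDown (x : Fin k → ℝ) {j : ℕ} (hj : 0 < j) (hjk : j ≤ k) :
    ∑ l, max (x l - sortDown x ⟨j - 1, by omega⟩) 0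
      = psum x j - j * sortDown x ⟨j - 1, by omega⟩ := by
  set c := sortDown x ⟨j - 1, by omega⟩
  rw [← Equiv.sum_comp (sortPerm x), ← sum_filter_add_sum_filter_not univ
    fun l : Fin k => (l : ℕ) < j]
  have hhead : ∀ l ∈ ({l : Fin k | (l : ℕ) < j} : Finset _),
      max (x (sortPerm x l) - c) 0 = sortDown x l - c := fun l hl =>
    max_eq_left (sub_nonneg.mpr (sortDown_antitone x (Fin.le_def.mpr (by
      rw [mem_filter] at hl; exact Nat.le_sub_one_of_lt hl.2))))
  have htail : ∀ l ∈ ({l : Fin k | ¬ (l : ℕ) < j} : Finset _),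
      max (x (sortPerm x l) - c) 0 = 0 := fun l hl =>
    max_eq_right (sub_nonpos.mpr (sortDown_antitone x (Fin.le_def.mpr (by
      rw [mem_filter] at hl; exact (Nat.sub_le j 1).trans (not_lt.mp hl.2)))))
  rw [sum_congr rfl hhead, sum_congr rfl htail, sum_const_zero, sum_sub_distrib, sum_const,
    Fin.card_filter_val_lt, min_eq_right hjk, psum]
  simp

lemma sum_le_psum_card (x : Fin k → ℝ) (s : Finset (Fin k)) : ∑ l ∈ s, x l ≤ psum x #s := by
  rcases s.eq_empty_or_nonempty with rfl | hs
  · simp [psum_zero]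
  set c := sortDown x ⟨#s - 1, by have := card_finset_fin_le s; have := hs.card_pos; omega⟩
  calc ∑ l ∈ s, x l ≤ ∑ l ∈ s, (c + max (x l - c) 0) :=
        sum_le_sum fun l _ => by linarith [le_max_left (x l - c) 0]
    _ ≤ #s * c + ∑ l, max (x l - c) 0 := by
        rw [sum_add_distrib, sum_const, nsmul_eq_mul]
        exact add_le_add le_rfl (sum_le_sum_of_subset_of_nonneg (subset_univ s)
          fun _ _ _ => le_max_right _ _)
    _ = psum x #s := by rw [sum_posPart_sub_sortDown x hs.card_pos (card_finset_fin_le s)]; ring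

lemma exists_card_eq_psum_eq_sum (x : Fin k → ℝ) {j : ℕ} (hj : j ≤ k) :
    ∃ s : Finset (Fin k), #s = j ∧ psum x j = ∑ l ∈ s, x l := by
  refine ⟨({l : Fin k | (l : ℕ) < j} : Finset (Fin k)).map (sortPerm x).toEmbedding, ?_, ?_⟩
  · rw [card_map, Fin.card_filter_val_lt, min_eq_right hj]
  · rw [psum, sum_map]
    rfl

end PartialSums

open RCLike

namespace OrthonormalBasis

variable {𝕜 E ι : Type*} [RCLike 𝕜] [NormedAddCommGroup E] [InnerProductSpace 𝕜 E]
  [Fintype ι] (b : OrthonormalBasis ι 𝕜 E)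

lemma inner_eq_zero_of_mem_span_image {J : Set ι} {x : E}
    (hx : x ∈ Submodule.span 𝕜 (b '' J)) {j : ι} (hj : j ∉ J) : inner 𝕜 (b j) x = 0 := by
  induction hx using Submodule.span_induction with
  | mem y hy =>
    obtain ⟨l, hl, rfl⟩ := hy
    exact b.orthonormal.2 fun h => hj (h ▸ hl)
  | zero => exact inner_zero_right _
  | add y z _ _ hy hz => rw [inner_add_right, hy, hz, add_zero]
  | smul c y _ hy => rw [inner_smul_right, hy, mul_zero]

lemma finrank_span_image (J : Finset ι) :
    Module.finrank 𝕜 (Submodule.span 𝕜 (b '' J)) = #J := by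
  rw [Set.image_eq_range, finrank_span_eq_card (b := fun x : (J : Set ι) => b x)
    ((b.orthonormal.comp _ Subtype.val_injective).linearIndependent)]
  simp

end OrthonormalBasis

namespace Matrix.IsHermitian

variable {𝕜 : Type*} [RCLike 𝕜] {n : Type*} [Fintype n] [DecidableEq n]
  {A : Matrix n n 𝕜} (hA : A.IsHermitian)

lemma star_eigenvectorUnitary_mulVec_apply (x : EuclideanSpace 𝕜 n) (j : n) :
    (star (hA.eigenvectorUnitary : Matrix n n 𝕜) *ᵥ ⇑x) j
      = inner 𝕜 (hA.eigenvectorBasis j) x := by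
  simp [mulVec, dotProduct, star_apply, EuclideanSpace.inner_eq_star_dotProduct, mul_comm]

lemma re_star_dotProduct_cfc_mulVec (f : ℝ → ℝ) (x : EuclideanSpace 𝕜 n) :
    re (star ⇑x ⬝ᵥ cfc f A *ᵥ ⇑x)
      = ∑ j, f (hA.eigenvalues j) * ‖inner 𝕜 (hA.eigenvectorBasis j) x‖ ^ 2 := by
  rw [cfc_eq hA, IsHermitian.cfc, Unitary.conjStarAlgAut_apply, ← mulVec_mulVec,
    ← mulVec_mulVec, dotProduct_mulVec]
  have hy : star ⇑x ᵥ* (hA.eigenvectorUnitary : Matrix n n 𝕜)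
      = star (star (hA.eigenvectorUnitary : Matrix n n 𝕜) *ᵥ ⇑x) := by
    rw [star_mulVec, star_eq_conjTranspose, conjTranspose_conjTranspose]
  rw [hy, dotProduct, map_sum]
  refine sum_congr rfl fun j _ => ?_
  simp only [mulVec_diagonal, star_eigenvectorUnitary_mulVec_apply, Pi.star_apply,
    RCLike.star_def]
  rw [mul_left_comm, RCLike.conj_mul, ← ofReal_pow]
  simp only [Function.comp_apply, ← ofReal_mul, ofReal_re]

lemma re_star_dotProduct_mulVec (x : EuclideanSpace 𝕜 n) :
    re (star ⇑x ⬝ᵥ A *ᵥ ⇑x)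
      = ∑ j, hA.eigenvalues j * ‖inner 𝕜 (hA.eigenvectorBasis j) x‖ ^ 2 := by
  convert hA.re_star_dotProduct_cfc_mulVec (fun t => t) x using 4
  exact (cfc_id' ℝ A hA).symm

lemma re_trace_cfc (f : ℝ → ℝ) : re (cfc f A).trace = ∑ j, f (hA.eigenvalues j) := by
  rw [cfc_eq hA, IsHermitian.cfc, Unitary.conjStarAlgAut_apply, trace_mul_cycle,
    Unitary.coe_star_mul_self, one_mul, trace_diagonal, map_sum]
  simp

lemma mul_norm_sq_le_re_star_dotProduct_mulVec {J : Set n} {a : ℝ}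
    (hJ : ∀ j ∈ J, a ≤ hA.eigenvalues j) {x : EuclideanSpace 𝕜 n}
    (hx : x ∈ Submodule.span 𝕜 (hA.eigenvectorBasis '' J)) :
    a * ‖x‖ ^ 2 ≤ re (star ⇑x ⬝ᵥ A *ᵥ ⇑x) := by
  rw [hA.re_star_dotProduct_mulVec, ← hA.eigenvectorBasis.sum_sq_norm_inner_right, mul_sum]
  refine sum_le_sum fun j _ => ?_
  by_cases hj : j ∈ J
  · exact mul_le_mul_of_nonneg_right (hJ j hj) (sq_nonneg _)
  · simp [hA.eigenvectorBasis.inner_eq_zero_of_mem_span_image hx hj]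

lemma re_star_dotProduct_mulVec_le_mul_norm_sq {J : Set n} {a : ℝ}
    (hJ : ∀ j ∈ J, hA.eigenvalues j ≤ a) {x : EuclideanSpace 𝕜 n}
    (hx : x ∈ Submodule.span 𝕜 (hA.eigenvectorBasis '' J)) :
    re (star ⇑x ⬝ᵥ A *ᵥ ⇑x) ≤ a * ‖x‖ ^ 2 := by
  rw [hA.re_star_dotProduct_mulVec, ← hA.eigenvectorBasis.sum_sq_norm_inner_right, mul_sum]
  refine sum_le_sum fun j _ => ?_
  by_cases hj : j ∈ J
  · exact mul_le_mul_of_nonneg_right (hJ j hj) (sq_nonneg _)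
  · simp [hA.eigenvectorBasis.inner_eq_zero_of_mem_span_image hx hj]

end Matrix.IsHermitian

section Eigenvalues

variable {k : ℕ}

lemma sum_eigDown {M : Matrix (Fin k) (Fin k) ℂ} (hM : M.IsHermitian) :
    ∑ i, eigDown hM i = re M.trace := by
  rw [eigDown, sum_sortDown, hM.trace_eq_sum_eigenvalues, map_sum]
  simp

/-- Weyl monotonicity, by Courant–Fischer: the spans of the top `i + 1` eigenvectors of `M` and of
the bottom `k - i` eigenvectors of `M'` meet nontrivially by a dimension count. -/
lemma eigDown_add_le_eigDown {M M' : Matrix (Fin k) (Fin k) ℂ} (hM : M.IsHermitian)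
    (hM' : M'.IsHermitian) {c : ℝ}
    (h : ∀ x : EuclideanSpace ℂ (Fin k),
      re (star ⇑x ⬝ᵥ M *ᵥ ⇑x) + c * ‖x‖ ^ 2 ≤ re (star ⇑x ⬝ᵥ M' *ᵥ ⇑x))
    (i : Fin k) : eigDown hM i + c ≤ eigDown hM' i := by
  obtain ⟨J, hJ, hJle⟩ := exists_card_eq_forall_sortDown_le hM.eigenvalues i
  obtain ⟨J', hJ', hJ'le⟩ := exists_card_eq_forall_le_sortDown hM'.eigenvalues i
  set V := Submodule.span ℂ (hM.eigenvectorBasis '' J)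
  set W := Submodule.span ℂ (hM'.eigenvectorBasis '' J')
  have hVW : 0 < Module.finrank ℂ ↥(V ⊓ W) := by
    have hsum := Submodule.finrank_sup_add_finrank_inf_eq V W
    have hsup := (Submodule.finrank_le (V ⊔ W)).trans_eq finrank_euclideanSpace_fin
    rw [hM.eigenvectorBasis.finrank_span_image, hM'.eigenvectorBasis.finrank_span_image] at hsum
    omega
  obtain ⟨x, ⟨hxV, hxW⟩, hx⟩ := Submodule.exists_mem_ne_zero_of_ne_bot
    (Submodule.one_le_finrank_iff.mp hVW)
  have hlow := hM.mul_norm_sq_le_re_star_dotProduct_mulVec hJle hxV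
  have hup := hM'.re_star_dotProduct_mulVec_le_mul_norm_sq hJ'le hxW
  have hpos : 0 < ‖x‖ ^ 2 := by positivity
  rw [eigDown, eigDown]
  nlinarith [h x]

end Eigenvalues

section Lidskii

variable {k : ℕ}

/-- **Lidskii's inequality**, by the argument of Li and Mathias: with `c` the `#I`-th largest
eigenvalue of `Q`, the perturbation `R = (Q - c)₊ ≥ 0` dominates `Q - c`, and its trace is
the sum of the `#I` largest eigenvalues of `Q` minus `#I * c`. -/
theorem sum_eigDown_sub_le_psum {P Q S : Matrix (Fin k) (Fin k) ℂ} (hP : P.IsHermitian)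
    (hQ : Q.IsHermitian) (hS : S.IsHermitian) (hPQ : S = P + Q) (I : Finset (Fin k)) :
    ∑ i ∈ I, (eigDown hS i - eigDown hP i) ≤ psum hQ.eigenvalues #I := by
  rcases I.eq_empty_or_nonempty with rfl | hI
  · simp [psum_zero]
  set c := sortDown hQ.eigenvalues
    ⟨#I - 1, by have := card_finset_fin_le I; have := hI.card_pos; omega⟩
  set g : ℝ → ℝ := fun t => max (t - c) 0
  set R := cfc g Q
  have hR : R.IsHermitian := cfc_predicate g Q
  have hPR : (P + R).IsHermitian := hP.add hR
  have hQR : ∀ x : EuclideanSpace ℂ (Fin k),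
      re (star ⇑x ⬝ᵥ Q *ᵥ ⇑x) - c * ‖x‖ ^ 2 ≤ re (star ⇑x ⬝ᵥ R *ᵥ ⇑x) ∧
        0 ≤ re (star ⇑x ⬝ᵥ R *ᵥ ⇑x) := fun x => by
    rw [hQ.re_star_dotProduct_mulVec, hQ.re_star_dotProduct_cfc_mulVec,
      ← hQ.eigenvectorBasis.sum_sq_norm_inner_right, mul_sum, ← sum_sub_distrib]
    exact ⟨sum_le_sum fun l _ => by
        rw [← sub_mul]; exact mul_le_mul_of_nonneg_right (le_max_left _ _) (sq_nonneg _),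
      sum_nonneg fun l _ => mul_nonneg (le_max_right _ _) (sq_nonneg _)⟩
  have hS_le : ∀ i, eigDown hS i ≤ eigDown hPR i + c := fun i => by
    have := eigDown_add_le_eigDown hS hPR (c := -c) (fun x => by
      rw [hPQ, add_mulVec, add_mulVec, dotProduct_add, dotProduct_add, map_add, map_add]
      linarith [(hQR x).1]) i
    linarith
  have hP_le : ∀ i, eigDown hP i ≤ eigDown hPR i := fun i => by
    have := eigDown_add_le_eigDown hP hPR (c := 0) (fun x => by
      rw [add_mulVec, dotProduct_add, map_add]
      linarith [(hQR x).2]) i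
    linarith
  have htrace : ∑ i, (eigDown hPR i - eigDown hP i) = psum hQ.eigenvalues #I - #I * c := by
    rw [sum_sub_distrib, sum_eigDown, sum_eigDown, trace_add, map_add, hQ.re_trace_cfc,
      sum_posPart_sub_sortDown _ hI.card_pos (card_finset_fin_le I)]
    ring
  calc ∑ i ∈ I, (eigDown hS i - eigDown hP i)
      ≤ ∑ i ∈ I, (eigDown hPR i - eigDown hP i + c) :=
        sum_le_sum fun i _ => by linarith [hS_le i]
    _ = ∑ i ∈ I, (eigDown hPR i - eigDown hP i) + #I * c := by
        rw [sum_add_distrib, sum_const, nsmul_eq_mul]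
    _ ≤ ∑ i, (eigDown hPR i - eigDown hP i) + #I * c := by
        gcongr
        · exact fun i _ _ => sub_nonneg.mpr (hP_le i)
        · exact subset_univ I
    _ = psum hQ.eigenvalues #I := by rw [htrace]; ring

end Lidskii

section Majorization

variable {k : ℕ}

lemma psum_sortDown (x : Fin k → ℝ) (j : ℕ) : psum (sortDown x) j = psum x j := by
  rw [psum, psum, sortDown_eq_self_of_antitone (sortDown_antitone x)]

theorem maj_add_sortDown_add_sortDown (d : Fin k → ℝ) {e f : Fin k → ℝ}
    (he : ∀ s : Finset (Fin k), ∑ l ∈ s, e l ≤ psum f #s) (hsum : ∑ l, e l = ∑ l, f l) :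
    Maj (d + e) (sortDown d + sortDown f) := by
  have htotal : ∑ l, (d + e) l = ∑ l, (sortDown d + sortDown f) l := by
    simp only [Pi.add_apply, sum_add_distrib, sum_sortDown, hsum]
  refine ⟨fun j => ?_, htotal⟩
  rcases le_or_gt k j with hkj | hjk
  · rw [psum_of_le _ hkj, psum_of_le _ hkj, htotal]
  obtain ⟨s, rfl, hs⟩ := exists_card_eq_psum_eq_sum (d + e) hjk.le
  rw [hs, psum_add_of_antitone (sortDown_antitone d) (sortDown_antitone f), psum_sortDown,
    psum_sortDown]
  simpa only [Pi.add_apply, sum_add_distrib] using add_le_add (sum_le_psum_card d s) (he s)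

end Majorization

section InvariantSubspace

variable {𝕜 : Type*} [CommRing 𝕜] [StarRing 𝕜] {n k m : ℕ}

lemma mul_conjTranspose_add_mul_conjTranspose_eq_one (hn : n = k + m)
    {X : Matrix (Fin n) (Fin k) 𝕜} {Xp : Matrix (Fin n) (Fin m) 𝕜}
    (hX : Xᴴ * X = 1) (hXp : Xpᴴ * Xp = 1) (hXXp : Xᴴ * Xp = 0) :
    X * Xᴴ + Xp * Xpᴴ = 1 := by
  have hXpX : Xpᴴ * X = 0 := by simpa using congrArg conjTranspose hXXp
  rw [← fromCols_mul_fromRows]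
  refine (fromCols_mul_fromRows_eq_one_comm ((finCongr hn).trans finSumFinEquiv.symm)
    X Xp Xᴴ Xpᴴ).mpr ?_
  rw [fromRows_mul_fromCols, hX, hXp, hXXp, hXpX, fromBlocks_one]

lemma conjTranspose_mul_mul_eq_zero_of_invariantRange {R ι : Type*} [Fintype R] [Fintype ι]
    {A : Matrix R R ℂ} {X : Matrix R (Fin k) ℂ} {Xp : Matrix R ι ℂ}
    (hXXp : Xᴴ * Xp = 0) (hInv : InvariantRange A X) : Xpᴴ * A * X = 0 := by
  have hXpX : Xpᴴ * X = 0 := by simpa using congrArg conjTranspose hXXp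
  ext i u
  obtain ⟨w, hw⟩ := hInv (Pi.single u 1)
  have hcol : (Xpᴴ * A * X) *ᵥ Pi.single u 1 = 0 := by
    rw [← mulVec_mulVec, ← mulVec_mulVec, hw, mulVec_mulVec, hXpX, zero_mulVec]
  simpa [mulVec_single] using congrFun hcol i

lemma eq_add_of_invariantRange (hn : n = k + m) {A : Matrix (Fin n) (Fin n) ℂ}
    (hA : A.IsHermitian) {X : Matrix (Fin n) (Fin k) ℂ} {Xp : Matrix (Fin n) (Fin m) ℂ}
    (hX : Xᴴ * X = 1) (hXp : Xpᴴ * Xp = 1) (hXXp : Xᴴ * Xp = 0) (hInv : InvariantRange A X) :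
    A = X * (Xᴴ * A * X) * Xᴴ + Xp * (Xpᴴ * A * Xp) * Xpᴴ := by
  have hXpAX := conjTranspose_mul_mul_eq_zero_of_invariantRange hXXp hInv
  have hXAXp : Xᴴ * A * Xp = 0 := by
    simpa [Matrix.mul_assoc, hA.eq] using congrArg conjTranspose hXpAX
  calc A = (X * Xᴴ + Xp * Xpᴴ) * A * (X * Xᴴ + Xp * Xpᴴ) := by
        rw [mul_conjTranspose_add_mul_conjTranspose_eq_one hn hX hXp hXXp, Matrix.one_mul,
          Matrix.mul_one]
    _ = X * (Xᴴ * A * X) * Xᴴ + X * (Xᴴ * A * Xp) * Xpᴴ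
        + (Xp * (Xpᴴ * A * X) * Xᴴ + Xp * (Xpᴴ * A * Xp) * Xpᴴ) := by
        simp only [Matrix.add_mul, Matrix.mul_add, Matrix.mul_assoc]
        abel
    _ = X * (Xᴴ * A * X) * Xᴴ + Xp * (Xpᴴ * A * Xp) * Xpᴴ := by
        rw [hXpAX, hXAXp]
        simp

lemma conjTranspose_mul_mul_eq_add_of_invariantRange (hn : n = k + m)
    {A : Matrix (Fin n) (Fin n) ℂ} (hA : A.IsHermitian)
    {X : Matrix (Fin n) (Fin k) ℂ} {Xp : Matrix (Fin n) (Fin m) ℂ}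
    (hX : Xᴴ * X = 1) (hXp : Xpᴴ * Xp = 1) (hXXp : Xᴴ * Xp = 0) (hInv : InvariantRange A X)
    {ι : Type*} [Fintype ι] (Y : Matrix (Fin n) ι ℂ) :
    Yᴴ * A * Y = (Xᴴ * Y)ᴴ * (Xᴴ * A * X) * (Xᴴ * Y)
      + (Xpᴴ * Y)ᴴ * (Xpᴴ * A * Xp) * (Xpᴴ * Y) := by
  conv_lhs => rw [eq_add_of_invariantRange hn hA hX hXp hXXp hInv]
  simp only [Matrix.mul_add, Matrix.add_mul, conjTranspose_mul, conjTranspose_conjTranspose,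
    Matrix.mul_assoc]

end InvariantSubspace

theorem ritz_error_lidskii_step_general
    {n k m : ℕ} (hn : n = k + m)
    (A : Matrix (Fin n) (Fin n) ℂ) (hA : A.IsHermitian)
    (X : Matrix (Fin n) (Fin k) ℂ) (Xp : Matrix (Fin n) (Fin m) ℂ)
    (hX : Xᴴ * X = 1) (hXp : Xpᴴ * Xp = 1) (hXXp : Xᴴ * Xp = 0)
    (hInv : InvariantRange A X)
    (Y : Matrix (Fin n) (Fin k) ℂ) :
    Maj
      (fun i => eigDown (Matrix.isHermitian_conjTranspose_mul_mul X hA) i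
                  - eigDown (Matrix.isHermitian_conjTranspose_mul_mul Y hA) i)
      (fun i =>
        sortDown (fun j => eigDown (Matrix.isHermitian_conjTranspose_mul_mul X hA) j
          - eigDown (Matrix.isHermitian_conjTranspose_mul_mul (Xᴴ * Y)
              (Matrix.isHermitian_conjTranspose_mul_mul X hA)) j) i
        + eigDown ((Matrix.isHermitian_conjTranspose_mul_mul (Xpᴴ * Y)
            (Matrix.isHermitian_conjTranspose_mul_mul Xp hA)).neg) i) := by
  have hA₁₁ := isHermitian_conjTranspose_mul_mul X hA
  have hYAY := isHermitian_conjTranspose_mul_mul Y hA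
  have hM := isHermitian_conjTranspose_mul_mul (Xᴴ * Y) hA₁₁
  have hN := (isHermitian_conjTranspose_mul_mul (Xpᴴ * Y)
    (isHermitian_conjTranspose_mul_mul Xp hA)).neg
  have hdecomp : (Xᴴ * Y)ᴴ * (Xᴴ * A * X) * (Xᴴ * Y)
      = Yᴴ * A * Y + -((Xpᴴ * Y)ᴴ * (Xpᴴ * A * Xp) * (Xpᴴ * Y)) := by
    rw [conjTranspose_mul_mul_eq_add_of_invariantRange hn hA hX hXp hXXp hInv Y]
    abel
  have htrace : ∑ i, (eigDown hM i - eigDown hYAY i) = ∑ i, hN.eigenvalues i := by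
    rw [← sum_sortDown hN.eigenvalues, sum_sub_distrib, sum_eigDown, sum_eigDown,
      ← eigDown, sum_eigDown, hdecomp, trace_add, map_add]
    ring
  convert maj_add_sortDown_add_sortDown (fun i => eigDown hA₁₁ i - eigDown hM i)
    (sum_eigDown_sub_le_psum hYAY hN hM hdecomp) htrace using 1
  · ext i
    simp only [Pi.add_apply]
    ring
  · rfl

/-- With `[X, X⊥]` unitary, `range X` being `A`-invariant,
`C = Xᴴ Y`, `S = X⊥ᴴ Y`, `A₁₁ = Xᴴ A X`, and `A₂₂ = X⊥ᴴ A X⊥`, the difference of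
Ritz value vectors is (strongly) majorized by
`[λ(A₁₁) - λ(Cᴴ A₁₁ C)]^↓ + λ(-Sᴴ A₂₂ S)`. -/
theorem ritz_error_lidskii_step
    {n k m : ℕ} (hn : n = k + m)
    (A : Matrix (Fin n) (Fin n) ℂ) (hA : A.IsHermitian)
    (X : Matrix (Fin n) (Fin k) ℂ) (Xp : Matrix (Fin n) (Fin m) ℂ)
    (hX : Xᴴ * X = 1) (hXp : Xpᴴ * Xp = 1) (hXXp : Xᴴ * Xp = 0)
    (hInv : InvariantRange A X)
    (Y : Matrix (Fin n) (Fin k) ℂ) (hY : Yᴴ * Y = 1) :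
    Maj
      (fun i => eigDown (Matrix.isHermitian_conjTranspose_mul_mul X hA) i
                  - eigDown (Matrix.isHermitian_conjTranspose_mul_mul Y hA) i)
      (fun i =>
        sortDown (fun j => eigDown (Matrix.isHermitian_conjTranspose_mul_mul X hA) j
          - eigDown (Matrix.isHermitian_conjTranspose_mul_mul (Xᴴ * Y)
              (Matrix.isHermitian_conjTranspose_mul_mul X hA)) j) i
        + eigDown ((Matrix.isHermitian_conjTranspose_mul_mul (Xpᴴ * Y)
            (Matrix.isHermitian_conjTranspose_mul_mul Xp hA)).neg) i) :=
  ritz_error_lidskii_step_general hn A hA X Xp hX hXp hXXp hInv Y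
end

section
/- Let A ∈ ℂ^{n×n} be Hermitian and let x, y ∈ ℂ^n be unit vectors such that x is an eigenvector of A (i.e., Ax = λx for some λ ∈ ℝ). Then |x^H A x − y^H A y| ≤ spr(A) · sin²θ(x, y), where θ(x, y) = arccos|x^H y| ∈ [0, π/2] is the acute angle between x and y. -/
open Matrix Finset

/-!
Write `y = c x + w` with `c = xᴴ y` and `w ⊥ x`. As `x` lies in the kernel of the Hermitian
matrix `A - λ`, the cross terms vanish and `yᴴ A y - λ = wᴴ (A - λ) w`. Since `λ` is itself an
eigenvalue of `A`, every eigenvalue of `A - λ` lies in `[-spr A, spr A]`, so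
`|wᴴ (A - λ) w| ≤ spr(A) ‖w‖² = spr(A) (1 - |c|²) = spr(A) sin² θ(x, y)`.
-/

open scoped InnerProductSpace
open WithLp (toLp)

section InnerProductSpace

variable {𝕜 E ι : Type*} [RCLike 𝕜] [NormedAddCommGroup E] [InnerProductSpace 𝕜 E]

theorem LinearMap.IsSymmetric.inner_map_self_sub_of_mem_ker {S : E →ₗ[𝕜] E} (hS : S.IsSymmetric)
    {x : E} (hx : S x = 0) (y : E) : ⟪y - x, S (y - x)⟫_𝕜 = ⟪y, S y⟫_𝕜 := by
  rw [map_sub, hx, sub_zero, inner_sub_left, ← hS x, hx, inner_zero_left, sub_zero]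

theorem norm_sub_inner_smul_sq {x : E} (hx : ‖x‖ = 1) (y : E) :
    ‖y - ⟪x, y⟫_𝕜 • x‖ ^ 2 = ‖y‖ ^ 2 - ‖⟪x, y⟫_𝕜‖ ^ 2 := by
  rw [@norm_sub_sq 𝕜, inner_smul_right, ← inner_conj_symm, RCLike.conj_mul, norm_smul, hx,
    RCLike.norm_conj]
  norm_cast
  ring

theorem OrthonormalBasis.inner_map_self_eq_sum [Fintype ι] {S : E →ₗ[𝕜] E} (hS : S.IsSymmetric)
    (b : OrthonormalBasis ι 𝕜 E) {μ : ι → ℝ} (hb : ∀ i, S (b i) = (μ i : 𝕜) • b i) (w : E) :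
    ⟪w, S w⟫_𝕜 = ∑ i, (μ i : 𝕜) * (‖⟪b i, w⟫_𝕜‖ ^ 2 : ℝ) := by
  rw [← b.sum_inner_mul_inner]
  refine Finset.sum_congr rfl fun i _ => ?_
  rw [← hS, hb, inner_smul_left, RCLike.conj_ofReal, ← inner_conj_symm, mul_left_comm,
    RCLike.conj_mul]
  norm_cast

theorem OrthonormalBasis.norm_inner_map_self_le [Fintype ι] {S : E →ₗ[𝕜] E} (hS : S.IsSymmetric)
    (b : OrthonormalBasis ι 𝕜 E) {μ : ι → ℝ} (hb : ∀ i, S (b i) = (μ i : 𝕜) • b i) {r : ℝ}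
    (hμ : ∀ i, |μ i| ≤ r) (w : E) : ‖⟪w, S w⟫_𝕜‖ ≤ r * ‖w‖ ^ 2 := by
  rw [b.inner_map_self_eq_sum hS hb, ← b.sum_sq_norm_inner_right, Finset.mul_sum]
  refine (norm_sum_le _ _).trans (Finset.sum_le_sum fun i _ => ?_)
  rw [norm_mul, RCLike.norm_ofReal, RCLike.norm_ofReal, abs_sq]
  exact mul_le_mul_of_nonneg_right (hμ i) (sq_nonneg _)

theorem LinearMap.IsSymmetric.norm_sub_inner_map_self_le [Fintype ι] {T : E →ₗ[𝕜] E}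
    (hT : T.IsSymmetric) (b : OrthonormalBasis ι 𝕜 E) {μ : ι → ℝ}
    (hb : ∀ i, T (b i) = (μ i : 𝕜) • b i) {l r : ℝ} (hμ : ∀ i, |μ i - l| ≤ r) {x y : E}
    (hx : ‖x‖ = 1) (hy : ‖y‖ = 1) (hxl : T x = (l : 𝕜) • x) :
    ‖(l : 𝕜) - ⟪y, T y⟫_𝕜‖ ≤ r * (1 - ‖⟪x, y⟫_𝕜‖ ^ 2) := by
  set S : E →ₗ[𝕜] E := T - (l : 𝕜) • 1
  have hS : S.IsSymmetric := hT.sub (IsSymmetric.one.smul (RCLike.conj_ofReal l))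
  have hSb (i : ι) : S (b i) = ((μ i - l : ℝ) : 𝕜) • b i := by
    simp [S, hb, sub_smul]
  have hSx : S (⟪x, y⟫_𝕜 • x) = 0 := by simp [S, hxl]
  have hSy : ⟪y, S y⟫_𝕜 = ⟪y, T y⟫_𝕜 - l := by
    simp [S, inner_sub_right, inner_smul_right, inner_self_eq_norm_sq_to_K, hy]
  calc ‖(l : 𝕜) - ⟪y, T y⟫_𝕜‖ = ‖⟪y - ⟪x, y⟫_𝕜 • x, S (y - ⟪x, y⟫_𝕜 • x)⟫_𝕜‖ := by
        rw [hS.inner_map_self_sub_of_mem_ker hSx, hSy, norm_sub_rev]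
    _ ≤ r * ‖y - ⟪x, y⟫_𝕜 • x‖ ^ 2 := b.norm_inner_map_self_le hS hSb hμ _
    _ = r * (1 - ‖⟪x, y⟫_𝕜‖ ^ 2) := by rw [norm_sub_inner_smul_sq hx, hy, one_pow]

end InnerProductSpace

theorem Matrix.mem_spectrum_real_of_mulVec_eq_smul {𝕜 n : Type*} [RCLike 𝕜] [Fintype n]
    [DecidableEq n] {A : Matrix n n 𝕜} {x : n → 𝕜} {l : ℝ} (hx : x ≠ 0)
    (hxl : A *ᵥ x = (l : 𝕜) • x) : l ∈ spectrum ℝ A := by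
  apply spectrum.of_algebraMap_mem 𝕜
  rw [← Matrix.spectrum_toLpLin 2]
  refine Module.End.HasEigenvalue.mem_spectrum
    (Module.End.hasEigenvalue_of_hasEigenvector (x := toLp 2 x) ⟨?_, ?_⟩)
  · exact Module.End.mem_eigenspace_iff.mpr (congrArg (toLp 2) hxl)
  · simpa using hx

theorem Matrix.IsHermitian.abs_sub_eigenvalues_le_sprA {n : Type*} [Fintype n] [DecidableEq n]
    {A : Matrix n n ℂ} (hA : A.IsHermitian) {l : ℝ} (hl : l ∈ spectrum ℝ A) (i : n) :
    |hA.eigenvalues i - l| ≤ sprA hA := by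
  rw [hA.spectrum_real_eq_range_eigenvalues] at hl
  have hfin := Set.finite_range hA.eigenvalues
  have hmem := Set.mem_range_self (f := hA.eigenvalues) i
  rw [sprA, abs_le]
  constructor <;> linarith [le_csSup hfin.bddAbove hl, csInf_le hfin.bddBelow hl,
    le_csSup hfin.bddAbove hmem, csInf_le hfin.bddBelow hmem]

theorem EuclideanSpace.star_dotProduct_eq_inner {𝕜 ι : Type*} [RCLike 𝕜] [Fintype ι]
    (x y : ι → 𝕜) : star x ⬝ᵥ y = ⟪toLp 2 x, toLp 2 y⟫_𝕜 := by
  rw [inner_toLp_toLp, dotProduct_comm]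

theorem EuclideanSpace.norm_toLp_eq_one {𝕜 ι : Type*} [RCLike 𝕜] [Fintype ι] {x : ι → 𝕜}
    (hx : star x ⬝ᵥ x = 1) : ‖toLp 2 x‖ = 1 := by
  have h : ((‖toLp 2 x‖ : ℝ) : 𝕜) ^ 2 = 1 := by
    rw [← inner_self_eq_norm_sq_to_K, ← EuclideanSpace.star_dotProduct_eq_inner, hx]
  exact (pow_eq_one_iff_of_nonneg (norm_nonneg _) two_ne_zero).mp (by exact_mod_cast h)

theorem Matrix.IsHermitian.toEuclideanLin_eigenvectorBasis {𝕜 n : Type*} [RCLike 𝕜] [Fintype n]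
    [DecidableEq n] {A : Matrix n n 𝕜} (hA : A.IsHermitian) (i : n) :
    A.toEuclideanLin (hA.eigenvectorBasis i) = (hA.eigenvalues i : 𝕜) • hA.eigenvectorBasis i := by
  have h := hA.mulVec_eigenvectorBasis i
  rw [RCLike.real_smul_eq_coe_smul (K := 𝕜)] at h
  exact congrArg (toLp 2) h

/-- If `x` is a unit eigenvector of the Hermitian matrix `A`
and `y` is any unit vector, then
`|xᴴ A x - yᴴ A y| ≤ spr(A) * sin² θ(x,y)` where `θ(x,y) = arccos |xᴴ y|`. -/
theorem rayleigh_quotient_eigenvector_bound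
    {n : ℕ} (A : Matrix (Fin n) (Fin n) ℂ) (hA : A.IsHermitian)
    (x y : Fin n → ℂ)
    (hx : dotProduct (star x) x = 1) (hy : dotProduct (star y) y = 1)
    (heig : ∃ l : ℝ, A.mulVec x = (l : ℂ) • x) :
    ‖(dotProduct (star x) (A.mulVec x)
        - dotProduct (star y) (A.mulVec y))‖
      ≤ sprA hA
          * Real.sin (Real.arccos ‖(dotProduct (star x) y)‖) ^ 2 := by
  obtain ⟨l, hl⟩ := heig
  have hx0 : x ≠ 0 := by rintro rfl; simp at hx
  have hxAx : star x ⬝ᵥ (A *ᵥ x) = l := by rw [hl, dotProduct_smul, hx, smul_eq_mul, mul_one]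
  have hX := EuclideanSpace.norm_toLp_eq_one hx
  have hY := EuclideanSpace.norm_toLp_eq_one hy
  have hxy : ‖star x ⬝ᵥ y‖ ≤ 1 := by
    have h := norm_inner_le_norm (𝕜 := ℂ) (toLp 2 x) (toLp 2 y)
    rwa [← EuclideanSpace.star_dotProduct_eq_inner, hX, hY, mul_one] at h
  have hbound := (isSymmetric_toEuclideanLin_iff.mpr hA).norm_sub_inner_map_self_le
    hA.eigenvectorBasis hA.toEuclideanLin_eigenvectorBasis
    (hA.abs_sub_eigenvalues_le_sprA (mem_spectrum_real_of_mulVec_eq_smul hx0 hl)) hX hY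
    (congrArg (toLp 2) hl)
  rwa [Real.sin_arccos, Real.sq_sqrt (by nlinarith [norm_nonneg (star x ⬝ᵥ y)]), hxAx,
    EuclideanSpace.star_dotProduct_eq_inner, EuclideanSpace.star_dotProduct_eq_inner]
end
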